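/- If g ~ N(0,1), then for any τ ≥ 0, E[(g − ST(g; τ))²] = (1 − √(2/π)·τ·e^{−τ²/2}) + (τ² − 1)·erfc(τ/√2), where ST(g;τ) = sgn(g)·max(|g| − τ, 0) and erfc(t) = (2/√π)∫_t^∞ e^{−s²} ds. -/

import Mathlib

/-!
The residual satisfies `(g - ST(g; τ))² = min(g², τ²)`. Against the standard normal density `φ`,
split `ℝ` into `(-τ, τ]` and the two tails. On the tails the integrand is `τ² φ`, and by symmetry
each tail carries mass `Q(τ) = ∫_τ^∞ φ = erfc(τ/√2)/2`. On `(-τ, τ]`, since `-x φ(x)` is an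
antiderivative of `(x² - 1) φ(x)`, we get `∫ x² φ = -2τ φ(τ) + ∫ φ = -2τ φ(τ) + 1 - 2Q(τ)`.
-/

open MeasureTheory ProbabilityTheory

/-- Complementary error function erfc(t) = (2/√π) ∫_t^∞ e^{−s²} ds. -/
noncomputable def erfc (t : ℝ) : ℝ :=
  (2 / Real.sqrt Real.pi) * ∫ s in Set.Ioi t, Real.exp (-s^2)

open Set Real
open scoped NNReal

local notation "φ" => gaussianPDFReal 0 1

lemma sq_sub_sign_mul_max_abs_sub {τ : ℝ} (hτ : 0 ≤ τ) (x : ℝ) :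
    (x - Real.sign x * max (|x| - τ) 0) ^ 2 = min (x ^ 2) (τ ^ 2) := by
  rcases lt_trichotomy x 0 with hx | rfl | hx
  · rw [Real.sign_of_neg hx, abs_of_neg hx]
    rcases le_total (-x) τ with h | h
    · rw [max_eq_right (by linarith), min_eq_left (by nlinarith)]; ring
    · rw [max_eq_left (by linarith), min_eq_right (by nlinarith)]; ring
  · simp [sq_nonneg τ]
  · rw [Real.sign_of_pos hx, abs_of_pos hx]
    rcases le_total x τ with h | h
    · rw [max_eq_right (by linarith), min_eq_left (by nlinarith)]; ring
    · rw [max_eq_left (by linarith), min_eq_right (by nlinarith)]; ring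

lemma gaussianPDFReal_zero_one (x : ℝ) : φ x = (√(2 * π))⁻¹ * exp (-x ^ 2 / 2) := by
  simp [gaussianPDFReal]

lemma gaussianPDFReal_zero_neg (v : ℝ≥0) (x : ℝ) :
    gaussianPDFReal 0 v (-x) = gaussianPDFReal 0 v x := by
  simp [gaussianPDFReal]

lemma hasDerivAt_neg_mul_gaussianPDFReal_zero_one (x : ℝ) :
    HasDerivAt (fun y ↦ -y * φ y) ((x ^ 2 - 1) * φ x) x := by
  simp only [gaussianPDFReal_zero_one]
  have hexp : HasDerivAt (fun y ↦ exp (-y ^ 2 / 2)) (-x * exp (-x ^ 2 / 2)) x := by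
    have h : HasDerivAt (fun y : ℝ ↦ -y ^ 2 / 2) (-x) x :=
      ((hasDerivAt_pow 2 x).neg.div_const 2).congr_deriv (by ring)
    simpa [mul_comm] using h.exp
  have hneg : HasDerivAt (fun y : ℝ ↦ -y) (-1) x := (hasDerivAt_id' x).neg
  exact (hneg.mul (hexp.const_mul (√(2 * π))⁻¹)).congr_deriv (by ring)

lemma continuous_gaussianPDFReal (μ : ℝ) (v : ℝ≥0) : Continuous (gaussianPDFReal μ v) := by
  simp only [gaussianPDFReal_def]; fun_prop

lemma intervalIntegral_sq_mul_gaussianPDFReal_zero_one (a b : ℝ) :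
    ∫ x in a..b, x ^ 2 * φ x = a * φ a - b * φ b + ∫ x in a..b, φ x := by
  have hcont : Continuous fun x ↦ (x ^ 2 - 1) * φ x := by
    have := continuous_gaussianPDFReal 0 1; fun_prop
  have hftc := intervalIntegral.integral_eq_sub_of_hasDerivAt
    (fun x _ ↦ hasDerivAt_neg_mul_gaussianPDFReal_zero_one x) (hcont.intervalIntegrable a b)
  have hsplit : ∫ x in a..b, x ^ 2 * φ x =
      (∫ x in a..b, (x ^ 2 - 1) * φ x) + ∫ x in a..b, φ x := by
    rw [← intervalIntegral.integral_add (hcont.intervalIntegrable a b)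
      ((continuous_gaussianPDFReal 0 1).intervalIntegrable a b)]
    congr 1 with x
    ring
  rw [hsplit, hftc]
  ring

lemma integral_eq_setIntegral_Ioc_add_Iic_add_Ioi {E : Type*} [NormedAddCommGroup E]
    [NormedSpace ℝ E] {μ : Measure ℝ} {f : ℝ → E} (hf : Integrable f μ) {a b : ℝ} (hab : a ≤ b) :
    ∫ x, f x ∂μ = ∫ x in Ioc a b, f x ∂μ + ((∫ x in Iic a, f x ∂μ) + ∫ x in Ioi b, f x ∂μ) := by
  have hcompl : (Ioc a b)ᶜ = Iic a ∪ Ioi b := by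
    ext x
    simp only [mem_compl_iff, mem_Ioc, not_and_or, not_lt, not_le, mem_union, mem_Iic, mem_Ioi]
  rw [← integral_add_compl measurableSet_Ioc hf, hcompl,
    setIntegral_union (Iic_disjoint_Ioi hab) measurableSet_Ioi hf.integrableOn hf.integrableOn]

lemma setIntegral_Iic_neg_eq_setIntegral_Ioi_of_even {E : Type*} [NormedAddCommGroup E]
    [NormedSpace ℝ E] {f : ℝ → E} (hf : ∀ x, f (-x) = f x) (c : ℝ) :
    ∫ x in Iic (-c), f x = ∫ x in Ioi c, f x := by
  simp only [← integral_comp_neg_Ioi, hf]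

lemma integral_Ioc_neg_gaussianPDFReal_zero_one {τ : ℝ} (hτ : 0 ≤ τ) :
    ∫ x in Ioc (-τ) τ, φ x = 1 - 2 * ∫ x in Ioi τ, φ x := by
  have h := integral_eq_setIntegral_Ioc_add_Iic_add_Ioi (integrable_gaussianPDFReal 0 1)
    (neg_le_self hτ)
  rw [integral_gaussianPDFReal_eq_one 0 one_ne_zero,
    setIntegral_Iic_neg_eq_setIntegral_Ioi_of_even (gaussianPDFReal_zero_neg 1)] at h
  linarith

lemma integral_min_sq_mul_gaussianPDFReal_zero_one {τ : ℝ} (hτ : 0 ≤ τ) :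
    ∫ x, min (x ^ 2) (τ ^ 2) * φ x =
      1 - 2 * τ * φ τ + (τ ^ 2 - 1) * (2 * ∫ x in Ioi τ, φ x) := by
  have hle : -τ ≤ τ := neg_le_self hτ
  have hint : Integrable fun x ↦ min (x ^ 2) (τ ^ 2) * φ x := by
    refine (integrable_gaussianPDFReal 0 1).bdd_mul (c := τ ^ 2) (by fun_prop) (ae_of_all _ ?_)
    intro x
    rw [Real.norm_eq_abs, abs_of_nonneg (le_min (sq_nonneg x) (sq_nonneg τ))]
    exact min_le_right _ _
  have hinner :
      ∫ x in Ioc (-τ) τ, min (x ^ 2) (τ ^ 2) * φ x = ∫ x in Ioc (-τ) τ, x ^ 2 * φ x := by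
    refine setIntegral_congr_fun measurableSet_Ioc fun x hx ↦ ?_
    rw [min_eq_left (sq_le_sq' hx.1.le hx.2)]
  have hleft : ∫ x in Iic (-τ), min (x ^ 2) (τ ^ 2) * φ x = τ ^ 2 * ∫ x in Iic (-τ), φ x := by
    rw [← integral_const_mul]
    refine setIntegral_congr_fun measurableSet_Iic fun x hx ↦ ?_
    rw [min_eq_right (by nlinarith [mem_Iic.mp hx])]
  have hright : ∫ x in Ioi τ, min (x ^ 2) (τ ^ 2) * φ x = τ ^ 2 * ∫ x in Ioi τ, φ x := by
    rw [← integral_const_mul]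
    refine setIntegral_congr_fun measurableSet_Ioi fun x hx ↦ ?_
    rw [min_eq_right (by nlinarith [mem_Ioi.mp hx])]
  rw [integral_eq_setIntegral_Ioc_add_Iic_add_Ioi hint hle, hinner, hleft, hright,
    ← intervalIntegral.integral_of_le hle, intervalIntegral_sq_mul_gaussianPDFReal_zero_one,
    intervalIntegral.integral_of_le hle, integral_Ioc_neg_gaussianPDFReal_zero_one hτ,
    setIntegral_Iic_neg_eq_setIntegral_Ioi_of_even (gaussianPDFReal_zero_neg 1),
    gaussianPDFReal_zero_neg 1]
  ring

lemma erfc_div_sqrt_two (t : ℝ) : erfc (t / √2) = 2 * ∫ x in Ioi t, φ x := by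
  have hsq (x : ℝ) : exp (-((√2)⁻¹ * x) ^ 2) = exp (-x ^ 2 / 2) := by
    rw [mul_pow, inv_pow, sq_sqrt zero_le_two]; ring_nf
  have hsub : ∫ x in Ioi t, exp (-x ^ 2 / 2) = √2 * ∫ s in Ioi (t / √2), exp (-s ^ 2) := by
    have := integral_comp_mul_left_Ioi (fun s ↦ exp (-s ^ 2)) t
      (inv_pos.mpr (sqrt_pos.mpr zero_lt_two))
    rwa [inv_inv, smul_eq_mul, inv_mul_eq_div, funext hsq] at this
  simp only [erfc, gaussianPDFReal_zero_one, integral_const_mul, hsub]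
  rw [sqrt_mul zero_le_two]
  field_simp

/-- Second moment of the soft-thresholding residual of a standard Gaussian. -/
theorem stmt_17 (τ : ℝ) (hτ : 0 ≤ τ) :
    ∫ g : ℝ, (g - Real.sign g * max (|g| - τ) 0)^2 ∂(gaussianReal 0 1) =
      (1 - Real.sqrt (2 / Real.pi) * τ * Real.exp (-τ^2 / 2))
        + (τ^2 - 1) * erfc (τ / Real.sqrt 2) := by
  have hdensity : 2 * φ τ = √(2 / π) * exp (-τ ^ 2 / 2) := by
    rw [gaussianPDFReal_zero_one, sqrt_div zero_le_two, sqrt_mul zero_le_two]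
    field_simp
    rw [sq_sqrt zero_le_two]
  simp only [integral_gaussianReal_eq_integral_smul one_ne_zero, smul_eq_mul,
    sq_sub_sign_mul_max_abs_sub hτ, mul_comm (φ _)]
  rw [integral_min_sq_mul_gaussianPDFReal_zero_one hτ, erfc_div_sqrt_two]
  linear_combination (-τ) * hdensity
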